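/- Let A ∈ SL(2, ℂ) have eigenvalues λ, λ⁻¹ with |λ| > 1, and let A_ℝ ∈ GL(4, ℝ) be the corresponding real matrix. Let B be the block-diagonal linear endomorphism of ℂ¹⁶ ⊕ ∧²(ℂ⁴) acting by a permutation matrix on ℂ¹⁶ and by ∧²A_ℝ on ∧²(ℂ⁴). Then the set of eigenvalues of B consists of |λ|², |λ|⁻², and complex numbers of absolute value 1; in particular B has a real eigenvalue strictly greater than 1. -/

import Mathlib

open Polynomial
open scoped Matrix

noncomputable section

/-- The real `4×4` matrix (indexed by `Fin 2 × Fin 2`) corresponding to a complex `2×2`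
matrix `A` under the standard identification `ℂ² ≅ ℝ⁴`, `z = x + iy ↦ (x, y)`. -/
def realMat (A : Matrix (Fin 2) (Fin 2) ℂ) :
    Matrix (Fin 2 × Fin 2) (Fin 2 × Fin 2) ℝ :=
  Matrix.of fun p q =>
    if p.2 = 0 then (if q.2 = 0 then (A p.1 q.1).re else -(A p.1 q.1).im)
    else (if q.2 = 0 then (A p.1 q.1).im else (A p.1 q.1).re)

/-- Skew-symmetric matrices, a model for `∧²` of the column space. -/
def skewSub (ι R : Type*) [Fintype ι] [CommRing R] :
    Submodule R (Matrix ι ι R) where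
  carrier := {M | Mᵀ = -M}
  add_mem' := by
    intro a b ha hb
    simp only [Set.mem_setOf_eq] at *
    rw [Matrix.transpose_add, ha, hb, neg_add]
  zero_mem' := by simp
  smul_mem' := by
    intro c M hM
    simp only [Set.mem_setOf_eq] at *
    rw [Matrix.transpose_smul, hM, smul_neg]

/-- Conjugation `M ↦ B * M * Bᵀ`, the action induced by `B` on bilinear forms
(equivalently, on `∧²` after restriction to skew-symmetric matrices). -/
def conjMap {ι R : Type*} [Fintype ι] [DecidableEq ι] [CommRing R] (B : Matrix ι ι R) :
    Matrix ι ι R →ₗ[R] Matrix ι ι R where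
  toFun M := B * M * Bᵀ
  map_add' M N := by show B * (M + N) * Bᵀ = B * M * Bᵀ + B * N * Bᵀ; rw [Matrix.mul_add, Matrix.add_mul]
  map_smul' c M := by
    simp [Matrix.mul_smul, Matrix.smul_mul]

lemma conjMap_skew {ι R : Type*} [Fintype ι] [DecidableEq ι] [CommRing R]
    (B : Matrix ι ι R) : ∀ M ∈ skewSub ι R, conjMap B M ∈ skewSub ι R := by
  intro M hM
  have h : Mᵀ = -M := hM
  show (B * M * Bᵀ)ᵀ = -(B * M * Bᵀ)
  rw [Matrix.transpose_mul, Matrix.transpose_mul, Matrix.transpose_transpose, h]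
  simp [Matrix.mul_assoc]

/-- The endomorphism induced by `B` on `∧²` (modelled as skew-symmetric matrices). -/
def wedgeSq {ι R : Type*} [Fintype ι] [DecidableEq ι] [CommRing R] (B : Matrix ι ι R) :
    ↥(skewSub ι R) →ₗ[R] ↥(skewSub ι R) :=
  (conjMap B).restrict (conjMap_skew B)

/-!
Over `ℂ` the real matrix `A_ℝ` is similar to `A ⊕ Ā`, hence, since `λ ≠ λ⁻¹`, to the diagonal
matrix with entries `λ, λ̄, λ⁻¹, λ̄⁻¹`. Since `wedgeSq` is multiplicative, `wedgeSq (Q D Q⁻¹)`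
is conjugate to `wedgeSq D`, so `∧²A_ℝ` has the spectrum of `∧²` of that diagonal matrix, i.e.
the products `d_p d_q` with `p ≠ q`, which are `|λ|²`, `|λ|⁻²` and four numbers of modulus one.
The permutation block only contributes roots of unity, and the spectrum of a direct sum is the
union of the spectra.
-/

open Matrix Module.End

section Wedge

variable {ι R : Type*} [Fintype ι] [DecidableEq ι] [CommRing R]

lemma conjMap_mul (X Y : Matrix ι ι R) : conjMap (X * Y) = conjMap X ∘ₗ conjMap Y := by
  ext M : 1
  simp [conjMap, Matrix.transpose_mul, Matrix.mul_assoc]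

lemma wedgeSq_mul (X Y : Matrix ι ι R) : wedgeSq (X * Y) = wedgeSq X ∘ₗ wedgeSq Y := by
  ext S : 2
  simp [wedgeSq, conjMap_mul]

lemma wedgeSq_one : wedgeSq (1 : Matrix ι ι R) = LinearMap.id := by
  ext S : 2
  simp [wedgeSq, conjMap]

lemma conjMap_diagonal_apply (d : ι → R) (M : Matrix ι ι R) (a b : ι) :
    conjMap (diagonal d) M a b = d a * d b * M a b := by
  simp [conjMap, mul_diagonal, diagonal_mul]
  ring

end Wedge

section WedgeField

variable {ι K : Type*} [Fintype ι] [DecidableEq ι] [Field K]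

lemma charpoly_wedgeSq_conj {Q : Matrix ι ι K} (hQ : IsUnit Q) (D : Matrix ι ι K) :
    (wedgeSq (Q * D * Q⁻¹)).charpoly = (wedgeSq D).charpoly := by
  have hdet := (Q.isUnit_iff_isUnit_det).1 hQ
  let e : skewSub ι K ≃ₗ[K] skewSub ι K :=
    LinearEquiv.ofLinearMap (wedgeSq Q) (wedgeSq Q⁻¹)
      (by rw [← wedgeSq_mul, mul_nonsing_inv Q hdet, wedgeSq_one])
      (by rw [← wedgeSq_mul, nonsing_inv_mul Q hdet, wedgeSq_one])
  rw [← e.charpoly_conj (wedgeSq D), LinearEquiv.conj_apply, wedgeSq_mul, wedgeSq_mul]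
  rfl

lemma hasEigenvalue_wedgeSq_diagonal_iff [NeZero (2 : K)] (d : ι → K) (μ : K) :
    HasEigenvalue (wedgeSq (diagonal d)) μ ↔ ∃ p q, p ≠ q ∧ d p * d q = μ := by
  constructor
  · intro h
    obtain ⟨S, hS⟩ := h.exists_hasEigenvector
    have hSμ : ∀ a b, d a * d b * S.1 a b = μ * S.1 a b := fun a b => by
      simpa [wedgeSq, conjMap_diagonal_apply] using
        congrFun₂ (congrArg Subtype.val hS.apply_eq_smul) a b
    obtain ⟨p, q, hpq⟩ : ∃ p q, S.1 p q ≠ 0 := by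
      by_contra! h0
      exact hS.2 (Subtype.ext (Matrix.ext h0))
    refine ⟨p, q, ?_, mul_right_cancel₀ hpq (hSμ p q)⟩
    rintro rfl
    have hskew : S.1 p p = -S.1 p p := congrFun₂ S.2 p p
    have hdiag : 2 * S.1 p p = 0 := by linear_combination hskew
    exact hpq ((mul_eq_zero.1 hdiag).resolve_left two_ne_zero)
  · rintro ⟨p, q, hpq, rfl⟩
    let S : Matrix ι ι K := single p q 1 - single q p 1
    have hS : S ∈ skewSub ι K := by
      show Sᵀ = -S
      simp [S, transpose_single]
    have hSpq : S p q = 1 := by simp [S, hpq.symm]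
    refine hasEigenvalue_of_hasEigenvector (x := ⟨S, hS⟩) ⟨?_, ?_⟩
    · rw [mem_eigenspace_iff]
      ext a b
      simp only [wedgeSq, LinearMap.restrict_apply, conjMap_diagonal_apply, SetLike.val_smul,
        Matrix.smul_apply, smul_eq_mul, S, Matrix.sub_apply, single_apply]
      split_ifs <;> grind
    · intro h
      simpa [hSpq] using congrFun₂ (congrArg Subtype.val h) p q

lemma hasEigenvalue_wedgeSq_iff_of_mul_eq_mul_diagonal [NeZero (2 : K)] {M Q : Matrix ι ι K}
    {d : ι → K} (hQ : IsUnit Q) (hMQ : M * Q = Q * diagonal d) (μ : K) :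
    HasEigenvalue (wedgeSq M) μ ↔ ∃ p q, p ≠ q ∧ d p * d q = μ := by
  have hM : M = Q * diagonal d * Q⁻¹ := by
    rw [← hMQ, Matrix.mul_assoc, mul_nonsing_inv Q ((Q.isUnit_iff_isUnit_det).1 hQ),
      Matrix.mul_one]
  rw [hasEigenvalue_iff_isRoot_charpoly, hM, charpoly_wedgeSq_conj hQ,
    ← hasEigenvalue_iff_isRoot_charpoly, hasEigenvalue_wedgeSq_diagonal_iff]

end WedgeField

section Diagonalization

variable {K : Type*} [Field K]

lemma hasEigenvalue_prodMap_iff {V W : Type*} [AddCommGroup V] [Module K V]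
    [FiniteDimensional K V] [AddCommGroup W] [Module K W] [FiniteDimensional K W]
    (f : Module.End K V) (g : Module.End K W) (μ : K) :
    HasEigenvalue (f.prodMap g) μ ↔ HasEigenvalue f μ ∨ HasEigenvalue g μ := by
  simp only [hasEigenvalue_iff_isRoot_charpoly, LinearMap.charpoly_prodMap, Polynomial.root_mul]

lemma exists_isUnit_mul_eq_mul_diagonal {ι : Type*} [Fintype ι] [DecidableEq ι]
    (A : Matrix ι ι K) {d : ι → K} (hd : Function.Injective d)
    (hroot : ∀ i, A.charpoly.IsRoot (d i)) : ∃ P, IsUnit P ∧ A * P = P * diagonal d := by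
  have hev : ∀ i, HasEigenvalue (toLin' A) (d i) := fun i => by
    rw [hasEigenvalue_iff_isRoot_charpoly, Matrix.charpoly_toLin']
    exact hroot i
  choose v hv using fun i => (hev i).exists_hasEigenvector
  refine ⟨of fun a i => v i a, ?_, ?_⟩
  · rw [← linearIndependent_cols_iff_isUnit]
    exact eigenvectors_linearIndependent' _ d hd v hv
  · ext a i
    rw [mul_diagonal]
    simpa [mul_comm, Matrix.mul_apply, mulVec, dotProduct] using congrFun (hv i).apply_eq_smul a

end Diagonalization

lemma norm_eq_one_of_hasEigenvalue_funLeft {ι : Type*} [Finite ι] (σ : Equiv.Perm ι) {μ : ℂ}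
    (h : HasEigenvalue (LinearMap.funLeft ℂ ℂ ⇑σ) μ) : ‖μ‖ = 1 := by
  obtain ⟨x, hx⟩ := h.exists_hasEigenvector
  have hpow : ∀ n, LinearMap.funLeft ℂ ℂ ⇑σ ^ n = LinearMap.funLeft ℂ ℂ ⇑(σ ^ n) := by
    intro n
    induction n with
    | zero => rfl
    | succ n ih => rw [pow_succ, ih, pow_succ', Equiv.Perm.coe_mul, LinearMap.funLeft_comp]; rfl
  have hμ : μ ^ orderOf σ = 1 := by
    have h1 := hx.pow_apply (orderOf σ)
    rw [hpow, pow_orderOf_eq_one, Equiv.Perm.coe_one, LinearMap.funLeft_id] at h1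
    have h2 : (μ ^ orderOf σ - 1) • x = 0 := by
      rw [sub_smul, one_smul, ← h1, sub_self]
    exact sub_eq_zero.1 ((smul_eq_zero.1 h2).resolve_right hx.2)
  exact Complex.norm_eq_one_of_pow_eq_one hμ (orderOf_pos σ).ne'

section Complexification

open Complex
open scoped ComplexConjugate Kronecker

def conjBlockDiag : Matrix (Fin 2) (Fin 2) ℂ →+* Matrix (Fin 2 × Fin 2) (Fin 2 × Fin 2) ℂ :=
  (blockDiagonalRingHom (Fin 2) (Fin 2) ℂ).comp
    (RingHom.pi ![RingHom.id _, (starRingEnd ℂ).mapMatrix])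

def conjPairs (d : Fin 2 → ℂ) (p : Fin 2 × Fin 2) : ℂ := ![d p.1, conj (d p.1)] p.2

lemma conjBlockDiag_diagonal (d : Fin 2 → ℂ) :
    conjBlockDiag (diagonal d) = diagonal (conjPairs d) := by
  ext ⟨i, k⟩ ⟨j, l⟩
  fin_cases k <;> fin_cases l <;>
    simp [conjBlockDiag, conjPairs, blockDiagonal_apply, diagonal_apply, RingHom.pi_apply,
      apply_ite (starRingEnd ℂ)]

/- In each real plane, `(1, -i)` and `(1, i)` are eigenvectors of the matrix of multiplication
by `a + bi`, with eigenvalues `a + bi` and `a - bi`. -/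
def complexifyingMatrix : Matrix (Fin 2 × Fin 2) (Fin 2 × Fin 2) ℂ :=
  (1 : Matrix (Fin 2) (Fin 2) ℂ) ⊗ₖ !![1, 1; -I, I]

lemma isUnit_complexifyingMatrix : IsUnit complexifyingMatrix := by
  rw [isUnit_iff_isUnit_det, complexifyingMatrix, det_kronecker]
  simp [det_fin_two_of]

lemma realMat_map_mul_complexifyingMatrix (A : Matrix (Fin 2) (Fin 2) ℂ) :
    (realMat A).map ofReal * complexifyingMatrix = complexifyingMatrix * conjBlockDiag A := by
  ext ⟨i, j⟩ ⟨k, l⟩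
  fin_cases j <;> fin_cases l <;>
    simp [realMat, conjBlockDiag, complexifyingMatrix, Matrix.mul_apply, Fintype.sum_prod_type,
      Fin.sum_univ_two, blockDiagonal_apply, Matrix.one_apply, RingHom.pi_apply, Complex.ext_iff]

lemma exists_isUnit_realMat_map_mul_eq_mul_diagonal {A P : Matrix (Fin 2) (Fin 2) ℂ}
    {d : Fin 2 → ℂ} (hP : IsUnit P) (hAP : A * P = P * diagonal d) :
    ∃ Q, IsUnit Q ∧ (realMat A).map ofReal * Q = Q * diagonal (conjPairs d) :=
  ⟨complexifyingMatrix * conjBlockDiag P, isUnit_complexifyingMatrix.mul (hP.map _), by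
    rw [← Matrix.mul_assoc, realMat_map_mul_complexifyingMatrix, Matrix.mul_assoc, ← map_mul, hAP,
      map_mul, conjBlockDiag_diagonal, Matrix.mul_assoc]⟩

lemma conjPairs_mul_conjPairs {lam : ℂ} (hlam : lam ≠ 0) {p q : Fin 2 × Fin 2} (hpq : p ≠ q) :
    conjPairs ![lam, lam⁻¹] p * conjPairs ![lam, lam⁻¹] q = ((‖lam‖ : ℂ)) ^ 2 ∨
      conjPairs ![lam, lam⁻¹] p * conjPairs ![lam, lam⁻¹] q = (((‖lam‖ : ℂ)) ^ 2)⁻¹ ∨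
      ‖conjPairs ![lam, lam⁻¹] p * conjPairs ![lam, lam⁻¹] q‖ = 1 := by
  obtain ⟨i, s⟩ := p
  obtain ⟨j, t⟩ := q
  fin_cases i <;> fin_cases s <;> fin_cases j <;> fin_cases t <;>
    simp_all [conjPairs, ← mul_inv, mul_conj', conj_mul']

end Complexification

theorem stmt15_general (A : Matrix (Fin 2) (Fin 2) ℂ) (lam : ℂ)
    (hchar : A.charpoly = (X - C lam) * (X - C lam⁻¹))
    (hlam : 1 < ‖lam‖) (g : Equiv.Perm (Fin 16)) :
    Module.End.HasEigenvalue
      (LinearMap.prodMap (LinearMap.funLeft ℂ ℂ ⇑g)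
        (wedgeSq ((realMat A).map Complex.ofReal))) (((‖lam‖ : ℝ) : ℂ) ^ 2) ∧
    Module.End.HasEigenvalue
      (LinearMap.prodMap (LinearMap.funLeft ℂ ℂ ⇑g)
        (wedgeSq ((realMat A).map Complex.ofReal))) ((((‖lam‖ : ℝ) : ℂ) ^ 2)⁻¹) ∧
    (∀ μ : ℂ, Module.End.HasEigenvalue
        (LinearMap.prodMap (LinearMap.funLeft ℂ ℂ ⇑g)
          (wedgeSq ((realMat A).map Complex.ofReal))) μ →
      μ = ((‖lam‖ : ℝ) : ℂ) ^ 2 ∨ μ = (((‖lam‖ : ℝ) : ℂ) ^ 2)⁻¹ ∨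
        ‖μ‖ = 1) ∧
    (∃ μ : ℝ, 1 < μ ∧ Module.End.HasEigenvalue
      (LinearMap.prodMap (LinearMap.funLeft ℂ ℂ ⇑g)
        (wedgeSq ((realMat A).map Complex.ofReal))) (μ : ℂ)) := by
  have hlam0 : lam ≠ 0 := by rintro rfl; norm_num at hlam
  have hinj : Function.Injective ![lam, lam⁻¹] := injective_pair_iff_ne.2 fun h =>
    (inv_lt_one_of_one_lt₀ hlam).not_ge (by rw [← norm_inv, ← h]; exact hlam.le)
  obtain ⟨P, hP, hAP⟩ :=
    exists_isUnit_mul_eq_mul_diagonal A hinj (by simp [Fin.forall_fin_two, hchar])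
  obtain ⟨Q, hQ, hMQ⟩ := exists_isUnit_realMat_map_mul_eq_mul_diagonal hP hAP
  have hspec : ∀ μ, HasEigenvalue ((LinearMap.funLeft ℂ ℂ ⇑g).prodMap
      (wedgeSq ((realMat A).map Complex.ofReal))) μ ↔
      HasEigenvalue (LinearMap.funLeft ℂ ℂ ⇑g) μ ∨
        ∃ p q, p ≠ q ∧ conjPairs ![lam, lam⁻¹] p * conjPairs ![lam, lam⁻¹] q = μ := fun μ => by
    rw [hasEigenvalue_prodMap_iff, hasEigenvalue_wedgeSq_iff_of_mul_eq_mul_diagonal hQ hMQ]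
  have hbig := (hspec (((‖lam‖ : ℝ) : ℂ) ^ 2)).2 <|
    .inr ⟨(0, 0), (0, 1), by decide, by simp [conjPairs, Complex.mul_conj']⟩
  have hsmall := (hspec ((((‖lam‖ : ℝ) : ℂ) ^ 2)⁻¹)).2 <|
    .inr ⟨(1, 0), (1, 1), by decide, by simp [conjPairs, ← mul_inv, Complex.mul_conj']⟩
  refine ⟨hbig, hsmall, fun μ hμ => ?_, ⟨‖lam‖ ^ 2, by nlinarith, by exact_mod_cast hbig⟩⟩
  rcases (hspec μ).1 hμ with h | ⟨p, q, hpq, rfl⟩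
  · exact .inr (.inr (norm_eq_one_of_hasEigenvalue_funLeft g h))
  · exact conjPairs_mul_conjPairs hlam0 hpq

/-- Let `A ∈ SL(2, ℂ)` have eigenvalues `λ, λ⁻¹` with `|λ| > 1` and let
`A_ℝ` be the corresponding real `4×4` matrix.  Let `B` be the block-diagonal
endomorphism of `ℂ¹⁶ ⊕ ∧²(ℂ⁴)` acting by a permutation matrix on `ℂ¹⁶` and by
`∧²A_ℝ` (modelled as `M ↦ A_ℝ M A_ℝᵀ` on skew-symmetric matrices) on `∧²(ℂ⁴)`.
Then the eigenvalues of `B` are `|λ|²`, `|λ|⁻²` and complex numbers of absolute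
value `1`; in particular `B` has a real eigenvalue strictly greater than `1`. -/
theorem stmt15 (A : Matrix (Fin 2) (Fin 2) ℂ) (lam : ℂ)
    (hdet : A.det = 1)
    (hchar : A.charpoly = (X - C lam) * (X - C lam⁻¹))
    (hlam : 1 < ‖lam‖) (g : Equiv.Perm (Fin 16)) :
    Module.End.HasEigenvalue
      (LinearMap.prodMap (LinearMap.funLeft ℂ ℂ ⇑g)
        (wedgeSq ((realMat A).map Complex.ofReal))) (((‖lam‖ : ℝ) : ℂ) ^ 2) ∧
    Module.End.HasEigenvalue
      (LinearMap.prodMap (LinearMap.funLeft ℂ ℂ ⇑g)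
        (wedgeSq ((realMat A).map Complex.ofReal))) ((((‖lam‖ : ℝ) : ℂ) ^ 2)⁻¹) ∧
    (∀ μ : ℂ, Module.End.HasEigenvalue
        (LinearMap.prodMap (LinearMap.funLeft ℂ ℂ ⇑g)
          (wedgeSq ((realMat A).map Complex.ofReal))) μ →
      μ = ((‖lam‖ : ℝ) : ℂ) ^ 2 ∨ μ = (((‖lam‖ : ℝ) : ℂ) ^ 2)⁻¹ ∨
        ‖μ‖ = 1) ∧
    (∃ μ : ℝ, 1 < μ ∧ Module.End.HasEigenvalue
      (LinearMap.prodMap (LinearMap.funLeft ℂ ℂ ⇑g)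
        (wedgeSq ((realMat A).map Complex.ofReal))) (μ : ℂ)) :=
  stmt15_general A lam hchar hlam g
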